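/- Let D be a divisor on P^1 over an algebraically closed field F with deg(D) ≥ 0, written as D = d·P + D' where deg(D') = 0 and d = deg(D) ≥ 0, for some point P. If q is any nonzero element of the one-dimensional space L(D'), then {m_P(x)^i · q : 0 ≤ i ≤ d} is a basis of L(D), where m_P(x) = x if P = ∞ and m_P(x) = (x-p)^{-1} if P = [p:1]. -/
import Mathlib


/-- The points of the projective line over `F`: `some p` is the finite point `[p:1]`,
and `none` is the point at infinity `∞ = [1:0]`. -/
abbrev P1Point (F : Type*) := Option F

/-- The order of vanishing of a rational function `f ∈ F(x)` at a point of `ℙ¹`: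
at a finite point `[p:1]` it is the multiplicity of `p` as a root of the numerator minus
its multiplicity as a root of the denominator; at `∞` it is minus the degree
`deg(num) - deg(denom)` of `f`. -/
noncomputable def ordP1 {F : Type*} [Field F] (P : P1Point F) (f : RatFunc F) : ℤ :=
  match P with
  | none => -f.intDegree
  | some p => (Polynomial.rootMultiplicity p f.num : ℤ) -
      (Polynomial.rootMultiplicity p f.denom : ℤ)

/-- The Riemann–Roch space `L(D)` of a divisor `D` on `ℙ¹`:
all nonzero rational functions `f` with `div f + D ≥ 0`, together with `0`. -/
def RRP1 {F : Type*} [Field F] (D : P1Point F → ℤ) : Set (RatFunc F) :=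
  {f | f = 0 ∨ ∀ P, 0 ≤ ordP1 P f + D P}

open Polynomial RatFunc

namespace RRaux
variable {F : Type*} [Field F]

lemma ordP1_mul {f g : RatFunc F} (hf : f ≠ 0) (hg : g ≠ 0) (P : P1Point F) :
    ordP1 P (f * g) = ordP1 P f + ordP1 P g := by
  cases P with
  | none => simp only [ordP1, intDegree_mul hf hg]; ring
  | some p =>
    have hfg : f * g ≠ 0 := mul_ne_zero hf hg
    have h1 : (f*g).num ≠ 0 := num_ne_zero hfg
    have h2 : f.num ≠ 0 := num_ne_zero hf
    have h3 : g.num ≠ 0 := num_ne_zero hg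
    have d1 := denom_ne_zero (f*g)
    have d2 := denom_ne_zero f
    have d3 := denom_ne_zero g
    have e := congrArg (rootMultiplicity p) (RatFunc.num_denom_mul f g)
    rw [rootMultiplicity_mul (mul_ne_zero h1 (mul_ne_zero d2 d3)),
        rootMultiplicity_mul (mul_ne_zero (mul_ne_zero h2 h3) d1),
        rootMultiplicity_mul (mul_ne_zero d2 d3),
        rootMultiplicity_mul (mul_ne_zero h2 h3)] at e
    simp only [ordP1]
    omega

lemma ordP1_one (P : P1Point F) : ordP1 P (1 : RatFunc F) = 0 := by
  cases P with
  | none => simp [ordP1]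
  | some p =>
    simp only [ordP1, RatFunc.num_one, RatFunc.denom_one]
    rw [rootMultiplicity_eq_zero (by simp [Polynomial.IsRoot])]
    simp

lemma ordP1_inv {f : RatFunc F} (hf : f ≠ 0) (P : P1Point F) :
    ordP1 P f⁻¹ = -ordP1 P f := by
  have h := ordP1_mul hf (inv_ne_zero hf) P
  rw [mul_inv_cancel₀ hf, ordP1_one] at h
  omega

lemma ordP1_pow {f : RatFunc F} (hf : f ≠ 0) (n : ℕ) (P : P1Point F) :
    ordP1 P (f ^ n) = n * ordP1 P f := by
  induction n with
  | zero => simpa using ordP1_one P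
  | succ n ih =>
    rw [pow_succ, ordP1_mul (pow_ne_zero n hf) hf, ih]
    push_cast; ring

lemma ordP1_C {c : F} (hc : c ≠ 0) (P : P1Point F) : ordP1 P (RatFunc.C c) = 0 := by
  cases P with
  | none => simp [ordP1, intDegree_C]
  | some p =>
    simp only [ordP1, RatFunc.num_C, RatFunc.denom_C]
    rw [rootMultiplicity_eq_zero (by simp [Polynomial.IsRoot, hc]),
        rootMultiplicity_eq_zero (by simp [Polynomial.IsRoot])]
    simp

lemma ordP1_add {f g : RatFunc F} (hf : f ≠ 0) (hg : g ≠ 0) (hfg : f + g ≠ 0) (P : P1Point F) :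
    min (ordP1 P f) (ordP1 P g) ≤ ordP1 P (f + g) := by
  cases P with
  | none =>
    have h := intDegree_add_le hg hfg
    simp only [ordP1]
    omega
  | some p =>
    have h1 : (f+g).num ≠ 0 := num_ne_zero hfg
    have h2 : f.num ≠ 0 := num_ne_zero hf
    have h3 : g.num ≠ 0 := num_ne_zero hg
    have d1 := denom_ne_zero (f+g)
    have d2 := denom_ne_zero f
    have d3 := denom_ne_zero g
    have e := congrArg (rootMultiplicity p) (RatFunc.num_denom_add f g)
    rw [rootMultiplicity_mul (mul_ne_zero h1 (mul_ne_zero d2 d3)),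
        rootMultiplicity_mul (mul_ne_zero (num_mul_denom_add_denom_mul_num_ne_zero hfg) d1),
        rootMultiplicity_mul (mul_ne_zero d2 d3)] at e
    have hmin := rootMultiplicity_add p (num_mul_denom_add_denom_mul_num_ne_zero hfg)
    rw [rootMultiplicity_mul (mul_ne_zero h2 d3), rootMultiplicity_mul (mul_ne_zero d2 h3)] at hmin
    simp only [ordP1]
    omega

/-- `L(D)` as a submodule. -/
noncomputable def RRsub (D : P1Point F → ℤ) : Submodule F (RatFunc F) where
  carrier := RRP1 D
  zero_mem' := Or.inl rfl
  add_mem' := by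
    rintro f g (rfl | hf) (rfl | hg)
    · simp [RRP1]
    · simpa [RRP1] using Or.inr hg
    · simpa [RRP1] using Or.inr hf
    · by_cases hf0 : f = 0
      · subst hf0; exact Or.inr (by simpa using hg)
      by_cases hg0 : g = 0
      · subst hg0; exact Or.inr (by simpa using hf)
      by_cases hfg : f + g = 0
      · exact Or.inl hfg
      refine Or.inr fun P => ?_
      have := ordP1_add hf0 hg0 hfg P
      have h1 := hf P
      have h2 := hg P
      omega
  smul_mem' := by
    intro c f hf
    by_cases hc : c = 0
    · subst hc; simp [RRP1]
    rcases hf with rfl | hf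
    · simp [RRP1]
    by_cases hf0 : f = 0
    · subst hf0; simp [RRP1]
    refine Or.inr fun P => ?_
    have hCc : RatFunc.C c ≠ 0 := by simp [hc]
    rw [RatFunc.smul_eq_C_mul, ordP1_mul hCc hf0, ordP1_C hc]
    have := hf P
    omega

@[simp] lemma mem_RRsub {D : P1Point F → ℤ} {f : RatFunc F} :
    f ∈ RRsub D ↔ f ∈ RRP1 D := Iff.rfl

lemma ordP1_inf_poly (r : F[X]) :
    ordP1 none (algebraMap F[X] (RatFunc F) r) = -(r.natDegree : ℤ) := by
  simp [ordP1, intDegree_polynomial]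

lemma ordP1_fin_poly (p : F) (r : F[X]) :
    ordP1 (some p) (algebraMap F[X] (RatFunc F) r) = rootMultiplicity p r := by
  simp only [ordP1, num_algebraMap, denom_algebraMap]
  rw [show rootMultiplicity p (1 : F[X]) = 0 from
    rootMultiplicity_eq_zero (by simp [Polynomial.IsRoot])]
  simp

section AlgClosed
variable [IsAlgClosed F]
open scoped Classical

lemma sum_rootMult {r : F[X]} (hr : r ≠ 0) {T : Finset F} (hT : r.roots.toFinset ⊆ T) :
    ∑ p ∈ T, rootMultiplicity p r = r.natDegree := by
  classical
  have h1 : ∑ p ∈ T, Multiset.count p r.roots = Multiset.card r.roots := by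
    rw [← Multiset.toFinset_sum_count_eq]
    exact (Finset.sum_subset hT (fun x _ hx => by
      rw [Multiset.count_eq_zero]
      exact fun h => hx (Multiset.mem_toFinset.mpr h))).symm
  have h2 := splits_iff_card_roots.mp (IsAlgClosed.splits r)
  simp only [count_roots] at h1
  rw [h1, h2]

lemma sum_ordfin {f : RatFunc F} (hf : f ≠ 0) {T : Finset F}
    (hT1 : f.num.roots.toFinset ⊆ T) (hT2 : f.denom.roots.toFinset ⊆ T) :
    ∑ p ∈ T, ordP1 (some p) f = f.intDegree := by
  simp only [ordP1]
  rw [Finset.sum_sub_distrib, ← Nat.cast_sum, ← Nat.cast_sum,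
      sum_rootMult (num_ne_zero hf) hT1, sum_rootMult (denom_ne_zero f) hT2]
  rfl

/-- A nonzero element of `L(D')` for `D'` of degree zero has exactly the orders `-D'`. -/
lemma ord_eq_neg {q : RatFunc F} (hq0 : q ≠ 0) (D' : P1Point F →₀ ℤ)
    (hq : ∀ P, 0 ≤ ordP1 P q + D' P) (hdeg' : (D'.sum fun _ n => n) = 0) (P : P1Point F) :
    ordP1 P q = -D' P := by
  classical
  set T : Finset F := q.num.roots.toFinset ∪ q.denom.roots.toFinset ∪ D'.support.eraseNone with hT
  have hfinsum : ∑ p ∈ T, ordP1 (some p) q = q.intDegree :=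
    sum_ordfin hq0 (by intro x hx; exact Finset.mem_union_left _ (Finset.mem_union_left _ hx))
      (by intro x hx; exact Finset.mem_union_left _ (Finset.mem_union_right _ hx))
  have hsupp : D'.support ⊆ insert none (T.image some) := by
    intro P hP
    cases P with
    | none => exact Finset.mem_insert_self _ _
    | some p =>
      refine Finset.mem_insert_of_mem (Finset.mem_image_of_mem some ?_)
      exact Finset.mem_union_right _ (Finset.mem_eraseNone.mpr hP)
  have hDsum : D' none + ∑ p ∈ T, D' (some p) = 0 := by
    rw [← hdeg', Finsupp.sum_of_support_subset D' hsupp (fun P n => n) (fun _ _ => rfl)]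
    rw [Finset.sum_insert (by simp), Finset.sum_image (fun a _ b _ h => Option.some_injective _ h)]
  have hsum : (ordP1 none q + D' none) + ∑ p ∈ T, (ordP1 (some p) q + D' (some p)) = 0 := by
    rw [Finset.sum_add_distrib, hfinsum]
    have : ordP1 none q = -q.intDegree := rfl
    omega
  have hnn : ∀ p ∈ T, 0 ≤ ordP1 (some p) q + D' (some p) := fun p _ => hq (some p)
  have hTsum_nn : 0 ≤ ∑ p ∈ T, (ordP1 (some p) q + D' (some p)) := Finset.sum_nonneg hnn
  have hnone : ordP1 none q + D' none = 0 := le_antisymm (by omega) (hq none)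
  have hTsum : ∑ p ∈ T, (ordP1 (some p) q + D' (some p)) = 0 := by omega
  have hzero : ∀ p ∈ T, ordP1 (some p) q + D' (some p) = 0 :=
    (Finset.sum_eq_zero_iff_of_nonneg hnn).mp hTsum
  cases P with
  | none => omega
  | some p =>
    by_cases hp : p ∈ T
    · have := hzero p hp; omega
    · have h1 : rootMultiplicity p q.num = 0 := by
        refine rootMultiplicity_eq_zero fun hroot => hp ?_
        exact Finset.mem_union_left _ (Finset.mem_union_left _
          (Multiset.mem_toFinset.mpr ((mem_roots (num_ne_zero hq0)).mpr hroot)))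
      have h2 : rootMultiplicity p q.denom = 0 := by
        refine rootMultiplicity_eq_zero fun hroot => hp ?_
        exact Finset.mem_union_left _ (Finset.mem_union_right _
          (Multiset.mem_toFinset.mpr ((mem_roots (denom_ne_zero q)).mpr hroot)))
      have h3 : D' (some p) = 0 := by
        by_contra h
        exact hp (Finset.mem_union_right _ (Finset.mem_eraseNone.mpr (Finsupp.mem_support_iff.mpr h)))
      simp only [ordP1, h1, h2, h3]
      simp

lemma denom_eq_one_of {g : RatFunc F} (hg : g ≠ 0)
    (h : ∀ p : F, 0 ≤ ordP1 (some p) g) : g.denom = 1 := by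
  have hroots : g.denom.roots = 0 := by
    by_contra hc
    obtain ⟨p, hp⟩ := Multiset.exists_mem_of_ne_zero hc
    have hrp : IsRoot g.denom p := (mem_roots (denom_ne_zero g)).mp hp
    have h1 : 0 < rootMultiplicity p g.denom := (rootMultiplicity_pos (denom_ne_zero g)).mpr hrp
    have h2 := h p
    simp only [ordP1] at h2
    have hnum : IsRoot g.num p := by
      have : 0 < rootMultiplicity p g.num := by omega
      exact (rootMultiplicity_pos (num_ne_zero hg)).mp this
    obtain ⟨a, b, hab⟩ := isCoprime_num_denom g
    have := congrArg (eval p) hab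
    simp [hnum.eq_zero, hrp.eq_zero] at this
  have hdeg : g.denom.natDegree = 0 := by
    have h2 := splits_iff_card_roots.mp (IsAlgClosed.splits g.denom)
    rw [hroots] at h2
    simpa using h2.symm
  exact (Polynomial.Monic.natDegree_eq_zero (monic_denom g)).mp hdeg

end AlgClosed

noncomputable def algLin : F[X] →ₗ[F] RatFunc F :=
  (IsScalarTower.toAlgHom F F[X] (RatFunc F)).toLinearMap

lemma algLin_apply (r : F[X]) : algLin (F := F) r = algebraMap F[X] (RatFunc F) r := rfl

lemma algLin_ker : LinearMap.ker (algLin (F := F)) = ⊥ :=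
  LinearMap.ker_eq_bot.mpr (RatFunc.algebraMap_injective F)

lemma li_monX {d : ℕ} (g : Fin (d+1) → ℕ) (hg : Function.Injective g) :
    LinearIndependent F fun i => (Polynomial.X : F[X]) ^ g i := by
  have := (Polynomial.basisMonomials F).linearIndependent.comp g hg
  simpa [Function.comp_def, Polynomial.coe_basisMonomials, Polynomial.X_pow_eq_monomial]
    using this

lemma li_X_pow_ratfunc {d : ℕ} :
    LinearIndependent F fun i : Fin (d+1) => (RatFunc.X : RatFunc F) ^ (i:ℕ) := by
  have h := (li_monX (F := F) (fun i : Fin (d+1) => (i:ℕ)) Fin.val_injective).map'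
    algLin algLin_ker
  have he : (⇑algLin ∘ fun i : Fin (d+1) => (Polynomial.X : F[X]) ^ (i:ℕ))
      = fun i : Fin (d+1) => (RatFunc.X : RatFunc F) ^ (i:ℕ) := by
    funext i
    simp [algLin_apply, map_pow, RatFunc.algebraMap_X]
  rwa [he] at h

lemma li_inv_pow {d : ℕ} (p : F) :
    LinearIndependent F
      fun i : Fin (d+1) => ((RatFunc.X - RatFunc.C p)⁻¹ : RatFunc F) ^ (i:ℕ) := by
  set u : RatFunc F := algebraMap F[X] (RatFunc F) (Polynomial.X - Polynomial.C p) with hu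
  have hu0 : u ≠ 0 := by
    rw [hu]
    exact RatFunc.algebraMap_ne_zero (Polynomial.X_sub_C_ne_zero p)
  have hXC : (RatFunc.X - RatFunc.C p : RatFunc F) = u := by
    rw [hu, map_sub, RatFunc.algebraMap_X, RatFunc.algebraMap_C]
  have h1 : LinearIndependent F
      fun i : Fin (d+1) => (Polynomial.X - Polynomial.C p : F[X]) ^ (d - (i:ℕ)) := by
    apply LinearIndependent.of_comp
      (Polynomial.aeval (Polynomial.X + Polynomial.C p) : F[X] →ₐ[F] F[X]).toLinearMap
    have he : (⇑(Polynomial.aeval (Polynomial.X + Polynomial.C p) : F[X] →ₐ[F] F[X]).toLinearMap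
        ∘ fun i : Fin (d+1) => (Polynomial.X - Polynomial.C p : F[X]) ^ (d - (i:ℕ)))
        = fun i : Fin (d+1) => (Polynomial.X : F[X]) ^ (d - (i:ℕ)) := by
      funext i
      simp [map_pow]
    rw [he]
    exact li_monX _ (fun a b hab => by
      have ha := a.isLt
      have hb := b.isLt
      exact Fin.ext (by omega))
  have h2 := h1.map' algLin algLin_ker
  have he2 : (⇑algLin ∘ fun i : Fin (d+1) => (Polynomial.X - Polynomial.C p : F[X]) ^ (d - (i:ℕ)))
      = fun i : Fin (d+1) => u ^ (d - (i:ℕ)) := by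
    funext i
    simp [algLin_apply, map_pow, hu]
  rw [he2] at h2
  apply LinearIndependent.of_comp (LinearMap.mulRight F (u ^ d))
  have he3 : (⇑(LinearMap.mulRight F (u ^ d))
      ∘ fun i : Fin (d+1) => ((RatFunc.X - RatFunc.C p)⁻¹ : RatFunc F) ^ (i:ℕ))
      = fun i : Fin (d+1) => u ^ (d - (i:ℕ)) := by
    funext i
    have hi : (i:ℕ) ≤ d := by have := i.isLt; omega
    simp only [Function.comp_apply, LinearMap.mulRight_apply]
    rw [hXC, inv_pow, pow_sub₀ u hu0 hi]
    ring
  rw [he3]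
  exact h2

section AlgClosed2
variable [IsAlgClosed F]
open scoped Classical

lemma mem_span_pow_inf {g : RatFunc F} (hg : g ≠ 0) (d : ℕ)
    (hfin : ∀ p : F, 0 ≤ ordP1 (some p) g) (hinf : -(d:ℤ) ≤ ordP1 none g) :
    g ∈ Submodule.span F (Set.range fun i : Fin (d+1) => (RatFunc.X : RatFunc F) ^ (i:ℕ)) := by
  have hden := denom_eq_one_of hg hfin
  have hgeq : g = algebraMap F[X] (RatFunc F) g.num := by
    conv_lhs => rw [← num_div_denom g]
    rw [hden, map_one, div_one]
  have hdeg : g.num.natDegree ≤ d := by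
    have h2 : ordP1 none g = -(g.num.natDegree : ℤ) := by
      conv_lhs => rw [hgeq]
      rw [ordP1_inf_poly]
    omega
  obtain ⟨r, hr, hrd⟩ : ∃ r : F[X], g = algebraMap _ _ r ∧ r.natDegree ≤ d :=
    ⟨g.num, hgeq, hdeg⟩
  rw [hr, Polynomial.as_sum_range' r (d+1) (by omega), map_sum]
  apply Submodule.sum_mem
  intro i hi
  rw [← Polynomial.C_mul_X_pow_eq_monomial, map_mul, map_pow, RatFunc.algebraMap_C,
    RatFunc.algebraMap_X, ← RatFunc.smul_eq_C_mul]
  exact Submodule.smul_mem _ _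
    (Submodule.subset_span ⟨⟨i, Finset.mem_range.mp hi⟩, rfl⟩)

lemma mem_span_pow_fin {g : RatFunc F} (hg : g ≠ 0) (d : ℕ) (p : F)
    (hfin : ∀ p' : F, p' ≠ p → 0 ≤ ordP1 (some p') g)
    (hp : -(d:ℤ) ≤ ordP1 (some p) g) (hinf : 0 ≤ ordP1 none g) :
    g ∈ Submodule.span F
      (Set.range fun i : Fin (d+1) => ((RatFunc.X - RatFunc.C p)⁻¹ : RatFunc F) ^ (i:ℕ)) := by
  set u : RatFunc F := algebraMap F[X] (RatFunc F) (Polynomial.X - Polynomial.C p) with hu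
  have hu0 : u ≠ 0 := by
    rw [hu]
    exact RatFunc.algebraMap_ne_zero (Polynomial.X_sub_C_ne_zero p)
  have hXC : (RatFunc.X - RatFunc.C p : RatFunc F) = u := by
    rw [hu, map_sub, RatFunc.algebraMap_X, RatFunc.algebraMap_C]
  set g' : RatFunc F := g * u ^ d with hg'def
  have hg'0 : g' ≠ 0 := mul_ne_zero hg (pow_ne_zero _ hu0)
  have hordu : ∀ p' : F, ordP1 (some p') u = if p' = p then 1 else 0 := by
    intro p'
    rw [hu, ordP1_fin_poly, rootMultiplicity_X_sub_C]
    split_ifs <;> norm_num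
  have hfin' : ∀ p' : F, 0 ≤ ordP1 (some p') g' := by
    intro p'
    rw [hg'def, ordP1_mul hg (pow_ne_zero _ hu0), ordP1_pow hu0, hordu]
    by_cases hpp : p' = p
    · rw [hpp]
      have h4 : (if p = p then (1:ℤ) else 0) = 1 := by simp
      rw [h4]
      omega
    · have := hfin p' hpp
      have h4 : (if p' = p then (1:ℤ) else 0) = 0 := by simp [hpp]
      rw [h4]
      omega
  have hden := denom_eq_one_of hg'0 hfin'
  have hgeq' : g' = algebraMap F[X] (RatFunc F) g'.num := by
    conv_lhs => rw [← num_div_denom g']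
    rw [hden, map_one, div_one]
  have hdeg : g'.num.natDegree ≤ d := by
    have h1 : ordP1 none u = -1 := by
      rw [hu, ordP1_inf_poly, Polynomial.natDegree_X_sub_C]
      simp
    have h2 : ordP1 none g' = ordP1 none g - d := by
      rw [hg'def, ordP1_mul hg (pow_ne_zero _ hu0), ordP1_pow hu0, h1]
      ring
    have h3 : ordP1 none g' = -(g'.num.natDegree : ℤ) := by
      conv_lhs => rw [hgeq']
      rw [ordP1_inf_poly]
    omega
  obtain ⟨r, hr, hrd⟩ : ∃ r : F[X], g' = algebraMap _ _ r ∧ r.natDegree ≤ d :=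
    ⟨g'.num, hgeq', hdeg⟩
  have hgr : g = algebraMap F[X] (RatFunc F) r * (u⁻¹) ^ d := by
    rw [← hr, hg'def, inv_pow]
    field_simp
  have hrsum : r = ∑ j ∈ (taylor p r).support,
      Polynomial.C ((taylor p r).coeff j) * (Polynomial.X - Polynomial.C p) ^ j := by
    conv_lhs => rw [← Polynomial.sum_taylor_eq r p]
    rfl
  rw [hrsum] at hgr
  rw [hgr, map_sum, Finset.sum_mul]
  apply Submodule.sum_mem
  intro j hj
  have hjd : j ≤ d := le_trans (le_trans (Polynomial.le_natDegree_of_mem_supp j hj)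
    (le_of_eq (Polynomial.natDegree_taylor r p))) hrd
  have key : (u⁻¹ : RatFunc F) ^ (d - j) = u ^ j * (u⁻¹) ^ d := by
    rw [inv_pow, inv_pow, pow_sub₀ u hu0 hjd, mul_inv, inv_inv]
    ring
  rw [map_mul, map_pow, RatFunc.algebraMap_C, ← hu, mul_assoc, ← key,
    ← RatFunc.smul_eq_C_mul]
  refine Submodule.smul_mem _ _ (Submodule.subset_span ⟨⟨d - j, by omega⟩, ?_⟩)
  simp only [hXC]

/-- The master lemma: everything except the case analysis on `P0`. -/
lemma master (D D' : P1Point F →₀ ℤ) (P0 : P1Point F) (d : ℕ)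
    (hD : D = Finsupp.single P0 (d : ℤ) + D')
    (hdeg' : (D'.sum fun _ n => n) = 0)
    (q : RatFunc F) (hq0 : q ≠ 0) (hq : q ∈ RRP1 (⇑D'))
    (mP : RatFunc F) (hm0 : mP ≠ 0)
    (hordP0 : ordP1 P0 mP = -1) (hord : ∀ P, P ≠ P0 → 0 ≤ ordP1 P mP)
    (hspan : ∀ g : RatFunc F, g ≠ 0 → (∀ P, P ≠ P0 → 0 ≤ ordP1 P g) →
      -(d:ℤ) ≤ ordP1 P0 g →
      g ∈ Submodule.span F (Set.range fun i : Fin (d+1) => mP ^ (i:ℕ)))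
    (hli : LinearIndependent F fun i : Fin (d+1) => mP ^ (i:ℕ)) :
    LinearIndependent F (fun i : Fin (d+1) => mP ^ (i:ℕ) * q) ∧
      (Submodule.span F (Set.range fun i : Fin (d+1) => mP ^ (i:ℕ) * q) : Set (RatFunc F))
        = RRP1 ⇑D := by
  have hqord : ∀ P, ordP1 P q = -D' P :=
    ord_eq_neg hq0 D' (fun P => (hq.resolve_left hq0) P) hdeg'
  have hDval : ∀ P, D P = (if P0 = P then (d:ℤ) else 0) + D' P := by
    intro P
    rw [hD]
    simp [Finsupp.add_apply, Finsupp.single_apply]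
  constructor
  · -- linear independence
    have h := hli.map' (LinearMap.mulRight F q)
      (LinearMap.ker_eq_bot.mpr (mul_left_injective₀ hq0))
    have he : (⇑(LinearMap.mulRight F q) ∘ fun i : Fin (d+1) => mP ^ (i:ℕ))
        = fun i : Fin (d+1) => mP ^ (i:ℕ) * q := by
      funext i
      simp [LinearMap.mulRight_apply]
    rwa [he] at h
  · -- span equality
    have hEq : Submodule.span F (Set.range fun i : Fin (d+1) => mP ^ (i:ℕ) * q)
        = RRsub ⇑D := by
      apply le_antisymm
      · rw [Submodule.span_le]
        rintro _ ⟨i, rfl⟩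
        refine Or.inr fun P => ?_
        have h1 : ordP1 P (mP ^ (i:ℕ) * q) = (i:ℕ) * ordP1 P mP + ordP1 P q := by
          rw [ordP1_mul (pow_ne_zero _ hm0) hq0, ordP1_pow hm0]
        rw [h1, hDval P, hqord P]
        by_cases hP : P = P0
        · subst hP
          rw [if_pos rfl, hordP0]
          have hi : (i:ℕ) ≤ d := by have := i.isLt; omega
          have : ((i:ℕ):ℤ) ≤ (d:ℤ) := by exact_mod_cast hi
          omega
        · rw [if_neg (fun h => hP h.symm)]
          have h2 := hord P hP
          have h3 : 0 ≤ ((i:ℕ):ℤ) * ordP1 P mP := mul_nonneg (by positivity) h2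
          omega
      · intro x hx
        rcases (hx : x ∈ RRP1 ⇑D) with rfl | hx'
        · exact Submodule.zero_mem _
        by_cases hx0 : x = 0
        · subst hx0; exact Submodule.zero_mem _
        have hg0 : x * q⁻¹ ≠ 0 := mul_ne_zero hx0 (inv_ne_zero hq0)
        have hgord : ∀ P, ordP1 P (x * q⁻¹) = ordP1 P x + D' P := by
          intro P
          rw [ordP1_mul hx0 (inv_ne_zero hq0), ordP1_inv hq0, hqord P]
          ring
        have hmem : x * q⁻¹ ∈ Submodule.span F (Set.range fun i : Fin (d+1) => mP ^ (i:ℕ)) := by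
          apply hspan _ hg0
          · intro P hP
            rw [hgord P]
            have := hx' P
            rw [hDval P, if_neg (fun h => hP h.symm)] at this
            omega
          · rw [hgord P0]
            have := hx' P0
            rw [hDval P0, if_pos rfl] at this
            omega
        have : x ∈ Submodule.map (LinearMap.mulRight F q)
            (Submodule.span F (Set.range fun i : Fin (d+1) => mP ^ (i:ℕ))) := by
          refine ⟨x * q⁻¹, hmem, ?_⟩
          rw [LinearMap.mulRight_apply]
          field_simp
        rw [Submodule.map_span, ← Set.range_comp] at this
        have he : (⇑(LinearMap.mulRight F q) ∘ fun i : Fin (d+1) => mP ^ (i:ℕ))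
            = fun i : Fin (d+1) => mP ^ (i:ℕ) * q := by
          funext i
          simp [LinearMap.mulRight_apply]
        rwa [he] at this
    rw [hEq]
    rfl

end AlgClosed2

end RRaux

/-- Let `D` be a divisor on `ℙ¹` over an algebraically closed field `F`
with `deg D ≥ 0`, written as `D = d·P + D'` where `deg D' = 0` and `d = deg D ≥ 0`, for some
point `P`. If `q` is any nonzero element of the one-dimensional space `L(D')`, then
`{m_P(x)^i · q : 0 ≤ i ≤ d}` is a basis of `L(D)`, where `m_P(x) = x` if `P = ∞` and
`m_P(x) = (x - p)⁻¹` if `P = [p:1]`. -/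
theorem basis_RR_P1_nonneg_degree {F : Type*} [Field F] [IsAlgClosed F]
    (D D' : P1Point F →₀ ℤ) (P0 : P1Point F) (d : ℕ)
    (hD : D = Finsupp.single P0 (d : ℤ) + D')
    (hdeg' : (D'.sum fun _ n => n) = 0)
    (hd : (d : ℤ) = D.sum fun _ n => n)
    (q : RatFunc F) (hq0 : q ≠ 0) (hq : q ∈ RRP1 (⇑D')) :
    let mP : RatFunc F :=
      match P0 with
      | none => RatFunc.X
      | some p => (RatFunc.X - RatFunc.C p)⁻¹
    let b : Fin (d + 1) → RatFunc F := fun i => mP ^ (i : ℕ) * q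
    LinearIndependent F b ∧
      (Submodule.span F (Set.range b) : Set (RatFunc F)) = RRP1 (⇑D) := by
  classical
  cases P0 with
  | none =>
    show LinearIndependent F (fun i : Fin (d+1) => (RatFunc.X : RatFunc F) ^ (i:ℕ) * q) ∧
      (Submodule.span F (Set.range fun i : Fin (d+1) =>
        (RatFunc.X : RatFunc F) ^ (i:ℕ) * q) : Set (RatFunc F)) = RRP1 ⇑D
    refine RRaux.master D D' none d hD hdeg' q hq0 hq RatFunc.X RatFunc.X_ne_zero
      (by simp [ordP1, RatFunc.intDegree_X]) ?_ ?_ RRaux.li_X_pow_ratfunc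
    · rintro (_ | p) hP
      · exact absurd rfl hP
      · have h := RRaux.ordP1_fin_poly p (Polynomial.X : F[X])
        rw [RatFunc.algebraMap_X] at h
        rw [h]
        positivity
    · exact fun g hg h1 h2 =>
        RRaux.mem_span_pow_inf hg d (fun p' => h1 (some p') (by simp)) h2
  | some p =>
    show LinearIndependent F
        (fun i : Fin (d+1) => ((RatFunc.X - RatFunc.C p)⁻¹ : RatFunc F) ^ (i:ℕ) * q) ∧
      (Submodule.span F (Set.range fun i : Fin (d+1) =>
        ((RatFunc.X - RatFunc.C p)⁻¹ : RatFunc F) ^ (i:ℕ) * q) : Set (RatFunc F)) = RRP1 ⇑D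
    have hXC : (RatFunc.X - RatFunc.C p : RatFunc F)
        = algebraMap F[X] (RatFunc F) (Polynomial.X - Polynomial.C p) := by
      rw [map_sub, RatFunc.algebraMap_X, RatFunc.algebraMap_C]
    have hu0 : (RatFunc.X - RatFunc.C p : RatFunc F) ≠ 0 := by
      rw [hXC]
      exact RatFunc.algebraMap_ne_zero (Polynomial.X_sub_C_ne_zero p)
    refine RRaux.master D D' (some p) d hD hdeg' q hq0 hq
      ((RatFunc.X - RatFunc.C p)⁻¹) (inv_ne_zero hu0) ?_ ?_ ?_ (RRaux.li_inv_pow p)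
    · rw [RRaux.ordP1_inv hu0, hXC, RRaux.ordP1_fin_poly,
        Polynomial.rootMultiplicity_X_sub_C_self]
      simp
    · rintro (_ | p') hP
      · rw [RRaux.ordP1_inv hu0, hXC, RRaux.ordP1_inf_poly, Polynomial.natDegree_X_sub_C]
        simp
      · have hpp : p' ≠ p := fun h => hP (by rw [h])
        rw [RRaux.ordP1_inv hu0, hXC, RRaux.ordP1_fin_poly,
          Polynomial.rootMultiplicity_X_sub_C]
        simp [hpp]
    · intro g hg h1 h2
      exact RRaux.mem_span_pow_fin hg d p
        (fun p' hpp => h1 (some p') (by simp [hpp])) h2 (h1 none (by simp))
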